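/- Define an equivalence relation on ℂ × ℂ by declaring (z, w) ≈ (z', w') if and only if there exist θ ∈ ℝ and ε ∈ {1, −1} with z' = ε·e^{iθ}·z and w' = ε·e^{2iθ}·w. Then the quotient topological space (ℂ × ℂ)/≈ is homeomorphic to ℝ³ (i.e., to EuclideanSpace ℝ (Fin 3)). -/

import Mathlib

open Complex

/-- The relation on ℂ × ℂ: `(z, w) ≈ (z', w')` iff there are `θ ∈ ℝ` and
`ε ∈ {1, -1}` with `z' = ε e^{iθ} z` and `w' = ε e^{2iθ} w`. -/
def circleRel : (ℂ × ℂ) → (ℂ × ℂ) → Prop := fun p q =>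
  ∃ (θ : ℝ) (ε : ℝ), (ε = 1 ∨ ε = -1) ∧
    q.1 = ε * Complex.exp (θ * Complex.I) * p.1 ∧
    q.2 = ε * Complex.exp (2 * θ * Complex.I) * p.2

open Real

/-- The invariant map `(z, w) ↦ (|z| - |w|, conj(z)^4 w^2)`, which induces a
homeomorphism of the quotient with `ℝ × ℂ`. -/
noncomputable def Fmap : ℂ × ℂ → ℝ × ℂ := fun p =>
  (‖p.1‖ - ‖p.2‖, (starRingEnd ℂ p.1) ^ 4 * p.2 ^ 2)

lemma Fmap_continuous : Continuous Fmap := by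
  apply Continuous.prodMk
  · exact (continuous_norm.comp continuous_fst).sub
      (continuous_norm.comp continuous_snd)
  · exact ((Complex.continuous_conj.comp continuous_fst).pow 4).mul (continuous_snd.pow 2)

noncomputable def eI (x : ℝ) : ℂ := Complex.exp (x * I)

lemma eI_add (x y : ℝ) : eI (x + y) = eI x * eI y := by
  unfold eI; rw [← Complex.exp_add]; congr 1; push_cast; ring

lemma eI_int_two_pi (n : ℤ) : eI (2 * π * n) = 1 := by
  unfold eI
  rw [show ((2 * π * (n:ℝ) : ℝ) : ℂ) * I = (n : ℂ) * (2 * π * I) by push_cast; ring]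
  exact Complex.exp_int_mul_two_pi_mul_I n

lemma eI_add_int_two_pi (x : ℝ) (n : ℤ) : eI (x + 2*π*n) = eI x := by
  rw [eI_add, eI_int_two_pi, mul_one]

lemma eI_pi : eI π = -1 := Complex.exp_pi_mul_I

lemma eI_pow (x : ℝ) (n : ℕ) : eI x ^ n = eI (n * x) := by
  unfold eI; rw [← Complex.exp_nat_mul]; congr 1; push_cast; ring

lemma eI_conj (x : ℝ) : (starRingEnd ℂ) (eI x) = eI (-x) := by
  unfold eI; rw [← Complex.exp_conj]; congr 1
  simp [map_mul, Complex.conj_ofReal, Complex.conj_I]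

lemma eI_abs (x : ℝ) : ‖eI x‖ = 1 := Complex.norm_exp_ofReal_mul_I x

lemma exists_rot {z z' : ℂ} (h : ‖z‖ = ‖z'‖) :
    ∃ α : ℝ, z' = eI α * z := by
  refine ⟨z'.arg - z.arg, ?_⟩
  have hmul : eI (z'.arg - z.arg) * eI z.arg = eI z'.arg := by
    rw [← eI_add]; congr 1; ring
  calc z' = (‖z'‖ : ℂ) * eI z'.arg := (Complex.norm_mul_exp_arg_mul_I z').symm
    _ = (‖z‖ : ℂ) * (eI (z'.arg - z.arg) * eI z.arg) := by rw [h, hmul]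
    _ = eI (z'.arg - z.arg) * ((‖z‖ : ℂ) * eI z.arg) := by ring
    _ = eI (z'.arg - z.arg) * z := by
          rw [show ((‖z‖ : ℂ) * eI z.arg) = z from Complex.norm_mul_exp_arg_mul_I z]

lemma eI_eq_one_iff {x : ℝ} : eI x = 1 ↔ ∃ n : ℤ, x = 2 * π * n := by
  unfold eI
  rw [Complex.exp_eq_one_iff]
  constructor
  · rintro ⟨n, hn⟩
    refine ⟨n, ?_⟩
    have hn' : (x : ℂ) * I = ((2 * π * (n:ℝ) : ℝ) : ℂ) * I := by
      rw [hn]; push_cast; ring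
    have := mul_right_cancel₀ Complex.I_ne_zero hn'
    exact_mod_cast this
  · rintro ⟨n, hn⟩
    exact ⟨n, by rw [hn]; push_cast; ring⟩

lemma circleRel_iff (p q : ℂ × ℂ) : circleRel p q ↔
    ∃ (θ : ℝ) (ε : ℝ), (ε = 1 ∨ ε = -1) ∧ q.1 = ε * eI θ * p.1 ∧ q.2 = ε * eI (2*θ) * p.2 := by
  unfold circleRel eI
  constructor <;> rintro ⟨θ, ε, hε, h1, h2⟩ <;>
    exact ⟨θ, ε, hε, h1, by rw [h2]; congr 2; push_cast; ring⟩

lemma Fmap_invariant {p q : ℂ × ℂ} (h : circleRel p q) : Fmap q = Fmap p := by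
  obtain ⟨θ, ε, hε, h1, h2⟩ := h
  have hε2 : (ε : ℂ) ^ 2 = 1 := by rcases hε with h | h <;> simp [h]
  have habsε : |ε| = 1 := by rcases hε with h | h <;> simp [h]
  have habs2 : ‖Complex.exp (2 * θ * I)‖ = 1 := by
    have h2θ : (2 : ℂ) * θ * I = ((2 * θ : ℝ) : ℂ) * I := by push_cast; ring
    rw [h2θ]; exact Complex.norm_exp_ofReal_mul_I _
  have ha1 : ‖q.1‖ = ‖p.1‖ := by
    rw [h1]; simp [Complex.norm_exp_ofReal_mul_I, habsε]
  have ha2 : ‖q.2‖ = ‖p.2‖ := by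
    rw [h2]; simp [habs2, habsε]
  have key : (starRingEnd ℂ q.1) ^ 4 * q.2 ^ 2 = (starRingEnd ℂ p.1) ^ 4 * p.2 ^ 2 := by
    rw [h1, h2]
    have hc : (starRingEnd ℂ) (Complex.exp (θ * I)) = Complex.exp (-(θ * I)) := by
      rw [← Complex.exp_conj]; simp
    simp only [map_mul, hc, Complex.conj_ofReal, mul_pow, ← Complex.exp_nat_mul]
    have he : Complex.exp ((4:ℕ) * -(θ * I)) * Complex.exp ((2:ℕ) * (2 * θ * I)) = 1 := by
      rw [← Complex.exp_add]
      have : ((4:ℕ) : ℂ) * -(θ * I) + ((2:ℕ) : ℂ) * (2 * θ * I) = 0 := by push_cast; ring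
      rw [this, Complex.exp_zero]
    have hε6 : ((ε:ℂ)^4) * ((ε:ℂ)^2) = 1 := by
      have h3 : ((ε:ℂ)^2)^3 = 1 := by rw [hε2]; norm_num
      calc ((ε:ℂ)^4) * ((ε:ℂ)^2) = ((ε:ℂ)^2)^3 := by ring
        _ = 1 := h3
    calc (ε:ℂ)^4 * Complex.exp ((4:ℕ) * -(θ * I)) * (starRingEnd ℂ p.1)^4 *
          ((ε:ℂ)^2 * Complex.exp ((2:ℕ) * (2 * θ * I)) * p.2^2)
        = ((ε:ℂ)^4 * (ε:ℂ)^2) *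
          (Complex.exp ((4:ℕ) * -(θ * I)) * Complex.exp ((2:ℕ) * (2 * θ * I))) *
          ((starRingEnd ℂ p.1)^4 * p.2^2) := by ring
      _ = (starRingEnd ℂ p.1)^4 * p.2^2 := by rw [he, hε6]; ring
  simp [Fmap, ha1, ha2, key]

lemma strict_mono_aux {a b a' b' : ℝ} (ha : 0 ≤ a) (hb : 0 ≤ b) (ha' : a < a') (hb' : b < b') :
    a^4 * b^2 < a'^4 * b'^2 := by
  have h1 : a^4 ≤ a'^4 := pow_le_pow_left₀ ha (le_of_lt ha') 4
  have h2 : b^2 < b'^2 := pow_lt_pow_left₀ hb' hb two_ne_zero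
  have ha'pos : 0 < a' := lt_of_le_of_lt ha ha'
  calc a^4 * b^2 ≤ a'^4 * b^2 := mul_le_mul_of_nonneg_right h1 (sq_nonneg b)
    _ < a'^4 * b'^2 := mul_lt_mul_of_pos_left h2 (pow_pos ha'pos 4)

lemma uniq_ab {a b a' b' : ℝ} (ha : 0 ≤ a) (hb : 0 ≤ b) (ha' : 0 ≤ a') (hb' : 0 ≤ b')
    (hd : a - b = a' - b') (hp : a^4 * b^2 = a'^4 * b'^2) : a = a' ∧ b = b' := by
  rcases lt_trichotomy b b' with h | h | h
  · exact absurd hp (ne_of_lt (strict_mono_aux ha hb (by linarith) h))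
  · constructor <;> [linarith; exact h]
  · exact absurd hp.symm (ne_of_lt (strict_mono_aux ha' hb' (by linarith) h))

lemma rel_of_Fmap_eq {p q : ℂ × ℂ} (h : Fmap p = Fmap q) : circleRel p q := by
  obtain ⟨z, w⟩ := p
  obtain ⟨z', w'⟩ := q
  have ht : ‖z‖ - ‖w‖ = ‖z'‖ - ‖w'‖ :=
    congrArg Prod.fst h
  have hd : (starRingEnd ℂ z)^4 * w^2 = (starRingEnd ℂ z')^4 * w'^2 :=
    congrArg Prod.snd h
  have habs : (‖z‖)^4 * (‖w‖)^2
      = (‖z'‖)^4 * (‖w'‖)^2 := by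
    have := congrArg norm hd
    simpa [map_mul, map_pow, Complex.norm_conj] using this
  obtain ⟨haz, hbw⟩ := uniq_ab (norm_nonneg z) (norm_nonneg w)
    (norm_nonneg z') (norm_nonneg w') ht habs
  rw [circleRel_iff]
  by_cases hz : z = 0
  · have hz' : z' = 0 := by
      rw [← norm_eq_zero, ← haz, hz, norm_zero]
    obtain ⟨β, hβ⟩ := exists_rot hbw
    refine ⟨β/2, 1, Or.inl rfl, by simp [hz, hz'], ?_⟩
    rw [hβ, show (2:ℝ) * (β/2) = β by ring]
    simp
  · by_cases hw : w = 0
    · have hw' : w' = 0 := by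
        rw [← norm_eq_zero, ← hbw, hw, norm_zero]
      obtain ⟨α, hα⟩ := exists_rot haz
      exact ⟨α, 1, Or.inl rfl, by rw [hα]; simp, by simp [hw, hw']⟩
    · obtain ⟨α, hα⟩ := exists_rot haz
      obtain ⟨β, hβ⟩ := exists_rot hbw
      have hzc : (starRingEnd ℂ z)^4 * w^2 ≠ 0 := by
        apply mul_ne_zero
        · exact pow_ne_zero _ (by simpa using hz)
        · exact pow_ne_zero _ hw
      have h4 : (starRingEnd ℂ z')^4 * w'^2
          = eI (2*β - 4*α) * ((starRingEnd ℂ z)^4 * w^2) := by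
        rw [hα, hβ]
        simp only [map_mul, eI_conj, mul_pow, eI_pow]
        rw [show eI ((4:ℕ) * -α) * (starRingEnd ℂ z)^4 * (eI ((2:ℕ) * β) * w^2)
              = (eI ((4:ℕ) * -α) * eI ((2:ℕ) * β)) * ((starRingEnd ℂ z)^4 * w^2) by ring,
            ← eI_add, show ((4:ℕ) : ℝ) * -α + ((2:ℕ) : ℝ) * β = 2*β - 4*α by push_cast; ring]
      have key : eI (2*β - 4*α) = 1 := by
        have hca : eI (2*β - 4*α) * ((starRingEnd ℂ z)^4 * w^2)
            = (starRingEnd ℂ z)^4 * w^2 := h4.symm.trans hd.symm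
        rcases mul_left_eq_self₀.mp hca with h1 | h1
        · exact h1
        · exact absurd h1 hzc
      obtain ⟨n, hn⟩ := eI_eq_one_iff.mp key
      rcases Int.even_or_odd n with ⟨m, hm⟩ | ⟨m, hm⟩
      · refine ⟨α, 1, Or.inl rfl, by rw [hα]; simp, ?_⟩
        have hβ' : eI β = eI (2*α) := by
          rw [show β = 2*α + 2*π*(m:ℝ) by push_cast [hm] at hn; linarith,
            eI_add_int_two_pi]
        rw [hβ, hβ']; simp
      · refine ⟨α - π, -1, Or.inr rfl, ?_, ?_⟩
        · have e1 : eI (α - π) = - eI α := by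
            rw [show α - π = (α + π) + 2*π*((-1 : ℤ):ℝ) by push_cast; ring,
              eI_add_int_two_pi, eI_add, eI_pi, mul_neg_one]
          rw [hα, e1]; push_cast; ring
        · have e2 : eI (2*(α - π)) = eI (2*α) := by
            rw [show 2*(α-π) = 2*α + 2*π*((-1 : ℤ):ℝ) by push_cast; ring, eI_add_int_two_pi]
          have e3 : eI β = - eI (2*α) := by
            rw [show β = (2*α + π) + 2*π*((m:ℤ):ℝ) by push_cast [hm] at hn; linarith,
              eI_add_int_two_pi, eI_add, eI_pi, mul_neg_one]
          rw [hβ, e3, e2]; push_cast; ring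

lemma Fmap_surjective : Function.Surjective Fmap := by
  rintro ⟨t, d⟩
  set D := ‖d‖ with hD
  have hD0 : 0 ≤ D := norm_nonneg d
  set s₀ : ℝ := max 0 (-t) with hs₀def
  have hs₀ : 0 ≤ s₀ := le_max_left _ _
  have hts₀ : 0 ≤ t + s₀ := by
    have := le_max_right 0 (-t); linarith
  set s₁ : ℝ := s₀ + D + 1 with hs₁def
  have hle : s₀ ≤ s₁ := by linarith
  have hcont : ContinuousOn (fun s : ℝ => (t+s)^4 * s^2) (Set.Icc s₀ s₁) :=
    (((continuous_const.add continuous_id).pow 4).mul (continuous_id.pow 2)).continuousOn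
  have h0 : (t+s₀)^4 * s₀^2 = 0 := by
    rcases le_total 0 (-t) with h | h
    · rw [show s₀ = -t from max_eq_right h, add_neg_cancel]; ring
    · rw [show s₀ = (0:ℝ) from max_eq_left h]; ring
  have h1 : D ≤ (t+s₁)^4 * s₁^2 := by
    have hA : 1 ≤ t + s₁ := by linarith
    have hB : D + 1 ≤ s₁ := by linarith
    have hA4 : 1 ≤ (t+s₁)^4 := one_le_pow₀ hA
    have hB2 : (D+1)^2 ≤ s₁^2 := pow_le_pow_left₀ (by linarith) hB 2
    nlinarith
  have hmem : D ∈ Set.Icc ((t+s₀)^4 * s₀^2) ((t+s₁)^4 * s₁^2) := ⟨by rw [h0]; exact hD0, h1⟩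
  obtain ⟨b, hbmem, hfb⟩ := intermediate_value_Icc hle hcont hmem
  have hb0 : 0 ≤ b := le_trans hs₀ hbmem.1
  have hab : 0 ≤ t + b := by have := hbmem.1; linarith
  refine ⟨(((t+b : ℝ) : ℂ), ((b : ℝ) : ℂ) * eI (d.arg / 2)), Prod.ext ?_ ?_⟩
  · show ‖((t+b : ℝ) : ℂ)‖ - ‖((b:ℝ):ℂ) * eI (d.arg/2)‖ = t
    rw [norm_mul, Complex.norm_real, Complex.norm_real, eI_abs, Real.norm_eq_abs, Real.norm_eq_abs,
      _root_.abs_of_nonneg hab, _root_.abs_of_nonneg hb0]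
    ring
  · show (starRingEnd ℂ ((t+b : ℝ) : ℂ))^4 * (((b:ℝ):ℂ) * eI (d.arg/2))^2 = d
    have key : ((t+b:ℝ):ℂ)^4 * ((b:ℝ):ℂ)^2 = (D : ℂ) := by
      rw [← hfb]; push_cast; ring
    calc (starRingEnd ℂ ((t+b : ℝ) : ℂ))^4 * (((b:ℝ):ℂ) * eI (d.arg/2))^2
        = (((t+b:ℝ):ℂ)^4 * ((b:ℝ):ℂ)^2) * (eI (d.arg/2))^2 := by
          rw [Complex.conj_ofReal]; ring
      _ = (D:ℂ) * eI (((2:ℕ):ℝ) * (d.arg/2)) := by rw [key, eI_pow]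
      _ = (D:ℂ) * eI d.arg := by
          congr 1
          push_cast
          congr 1
          ring
      _ = d := Complex.norm_mul_exp_arg_mul_I d

lemma bound_aux {a b R : ℝ} (ha : 0 ≤ a) (hb : 0 ≤ b) (hR : 0 ≤ R)
    (h1 : |a - b| ≤ R) (h2 : a^4 * b^2 ≤ R) : a ≤ 2*R+1 ∧ b ≤ R+1 := by
  have habs := abs_le.mp h1
  have hbR : b ≤ R + 1 := by
    by_contra hc
    push_neg at hc
    have ha1 : 1 ≤ a := by linarith
    have ha4 : 1 ≤ a^4 := one_le_pow₀ ha1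
    have hb2 : (R+1)^2 ≤ b^2 := pow_le_pow_left₀ (by linarith) (le_of_lt hc) 2
    nlinarith
  exact ⟨by linarith, hbR⟩

lemma Fmap_proper : IsProperMap Fmap := by
  rw [isProperMap_iff_isCompact_preimage]
  refine ⟨Fmap_continuous, fun K hK => ?_⟩
  obtain ⟨C, hC⟩ := hK.isBounded.exists_norm_le
  set R : ℝ := max C 0 with hRdef
  have hR0 : 0 ≤ R := le_max_right _ _
  apply Metric.isCompact_of_isClosed_isBounded
  · exact hK.isClosed.preimage Fmap_continuous
  · rw [isBounded_iff_forall_norm_le]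
    refine ⟨2*R+1, fun p hp => ?_⟩
    have hn : ‖Fmap p‖ ≤ R := le_trans (hC _ hp) (le_max_left _ _)
    have h1 : |‖p.1‖ - ‖p.2‖| ≤ R :=
      le_trans (norm_fst_le (Fmap p)) hn
    have h2 : (‖p.1‖)^4 * (‖p.2‖)^2 ≤ R := by
      have := le_trans (norm_snd_le (Fmap p)) hn
      simpa [Fmap, map_mul, map_pow, Complex.norm_conj] using this
    obtain ⟨hA, hB⟩ := bound_aux (norm_nonneg p.1) (norm_nonneg p.2) hR0 h1 h2
    have : ‖p‖ = max (‖p.1‖) (‖p.2‖) := rfl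
    rw [this]
    exact max_le hA (by linarith)

noncomputable def Fbar : Quot circleRel → ℝ × ℂ :=
  Quot.lift Fmap (fun _ _ h => (Fmap_invariant h).symm)

lemma Fbar_continuous : Continuous Fbar :=
  continuous_quot_lift _ Fmap_continuous

lemma Fbar_bijective : Function.Bijective Fbar := by
  constructor
  · intro a b
    induction a using Quot.ind with | _ p =>
    induction b using Quot.ind with | _ q =>
    intro h
    exact Quot.sound (rel_of_Fmap_eq h)
  · intro y
    obtain ⟨p, hp⟩ := Fmap_surjective y
    exact ⟨Quot.mk _ p, hp⟩

lemma Fbar_isClosedMap : IsClosedMap Fbar := by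
  intro C hC
  have h1 : IsClosed (Quot.mk circleRel ⁻¹' C) := hC.preimage continuous_quot_mk
  have h2 : Fbar '' C = Fmap '' (Quot.mk circleRel ⁻¹' C) := by
    ext y
    constructor
    · rintro ⟨x, hx, rfl⟩
      induction x using Quot.ind with | _ p =>
      exact ⟨p, hx, rfl⟩
    · rintro ⟨p, hp, rfl⟩
      exact ⟨Quot.mk _ p, hp, rfl⟩
  rw [h2]
  exact Fmap_proper.isClosedMap _ h1

noncomputable def theEquiv : Quot circleRel ≃ (ℝ × ℂ) :=
  Equiv.ofBijective Fbar Fbar_bijective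

noncomputable def theHomeo : Quot circleRel ≃ₜ (ℝ × ℂ) where
  toEquiv := theEquiv
  continuous_toFun := Fbar_continuous
  continuous_invFun := by
    rw [continuous_iff_isClosed]
    intro C hC
    have h : theEquiv.symm ⁻¹' C = Fbar '' C := (Equiv.image_eq_preimage_symm theEquiv C).symm
    show IsClosed (⇑theEquiv.symm ⁻¹' C)
    rw [h]
    exact Fbar_isClosedMap C hC

/-- Theorem 1.1: the quotient of `ℂ × ℂ` by the `S¹ × ℤ₂`-action is
homeomorphic to `ℝ³`. -/
theorem quotient_homeomorph_euclidean_three :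
    Nonempty (Quot circleRel ≃ₜ EuclideanSpace ℝ (Fin 3)) := by
  have h : Module.finrank ℝ (ℝ × ℂ) = Module.finrank ℝ (EuclideanSpace ℝ (Fin 3)) := by
    simp [Module.finrank_prod, Complex.finrank_real_complex, finrank_euclideanSpace_fin]
  exact ⟨theHomeo.trans (ContinuousLinearEquiv.ofFinrankEq h).toHomeomorph⟩
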